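/- arXiv:1506.03303 — 5 statements merged into one kernel-verified Lean document; each statement's English description precedes it below -/
import Mathlib

section
/- Let G be a finite group, F a field with char(F) not dividing |G|, and H ⊆ K subgroups of G with H ≠ K. Set e = Ĥ − K̂. Then the minimum Hamming weight of a nonzero element of the left ideal (FG)e equals 2|H|. -/
open scoped Classical

/-- `hat F S` is the element `Ŝ = (1/|S|) ∑_{s ∈ S} s` of the group algebra `F G`. -/
noncomputable def hat (F : Type*) [Field F] {G : Type*} [Group G] [Fintype G]
    (S : Subgroup G) : MonoidAlgebra F G :=
  (Nat.card S : F)⁻¹ • ∑ g : G, if g ∈ S then MonoidAlgebra.of F G g else 0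

/-- The Hamming weight of an element of the group algebra: the number of nonzero
coefficients. -/
noncomputable def wt {F : Type*} [Field F] {G : Type*} [Group G]
    (α : MonoidAlgebra F G) : ℕ :=
  α.coeff.support.card

/-!
Right multiplication by `Ĥ` is a projection onto the right `H`-invariant elements, so every
`α` in `FG(Ĥ - K̂)` satisfies `αĤ = α` and `αK̂ = 0`. The first identity makes the support of
`α` a union of left cosets of `H`. If it were a single coset `xH`, then `α` would be a multiple
of `xĤ`, and `αK̂` a nonzero multiple of `xK̂`; hence a nonzero `α` has weight at least `2|H|`.
For `k ∈ K \ H` the element `(1 - k)(Ĥ - K̂) = Ĥ - kĤ` attains it.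
-/

open MonoidAlgebra Finset

section GroupAlgebra

variable {F : Type*} [Field F] {G : Type*} [Group G]

lemma wt_sub_le (a b : MonoidAlgebra F G) : wt (a - b) ≤ wt a + wt b := by
  rw [wt, wt, wt, coeff_sub]
  exact (card_le_card Finsupp.support_sub).trans (card_union_le _ _)

lemma wt_single_one_mul (g : G) (a : MonoidAlgebra F G) : wt (single g (1 : F) * a) = wt a := by
  rw [wt, wt, support_coeff_single_mul _ _ (by simp) g, card_map]

variable [Fintype G]

noncomputable def leftCosetFinset (H : Subgroup G) (x : G) : Finset G :=
  {y | x⁻¹ * y ∈ H}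

lemma mem_leftCosetFinset {H : Subgroup G} {x y : G} :
    y ∈ leftCosetFinset H x ↔ x⁻¹ * y ∈ H := by
  simp [leftCosetFinset]

lemma card_leftCosetFinset (H : Subgroup G) (x : G) :
    #(leftCosetFinset H x) = Nat.card H := by
  rw [leftCosetFinset, ← Fintype.card_subtype, ← Nat.card_eq_fintype_card]
  exact Nat.card_congr ((Equiv.mulLeft x⁻¹).subtypeEquiv fun _ => Iff.rfl)

lemma natCast_card_subgroup_ne_zero (hchar : (Fintype.card G : F) ≠ 0) (S : Subgroup G) :
    (Nat.card S : F) ≠ 0 := by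
  obtain ⟨c, hc⟩ := Subgroup.card_subgroup_dvd_card S
  rw [← Nat.card_eq_fintype_card, hc, Nat.cast_mul] at hchar
  exact left_ne_zero_of_mul hchar

lemma coeff_hat (S : Subgroup G) (x : G) :
    (hat F S).coeff x = if x ∈ S then (Nat.card S : F)⁻¹ else 0 := by
  rw [hat, coeff_smul_apply, ← sum_filter, coeff_sum, Finsupp.finsetSum_apply]
  simp only [of_apply, coeff_single, Finsupp.single_apply]
  rw [sum_ite_eq']
  simp

lemma wt_hat {S : Subgroup G} (hS : (Nat.card S : F) ≠ 0) : wt (hat F S) = Nat.card S := by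
  rw [wt, ← card_leftCosetFinset S 1]
  congr 1
  ext x
  rw [Finsupp.mem_support_iff, coeff_hat, mem_leftCosetFinset, inv_one, one_mul]
  split_ifs with hx
  · simpa [hx] using inv_ne_zero hS
  · simp [hx]

lemma hat_mul_eq_self {T : Subgroup G} (hT : (Nat.card T : F) ≠ 0) {x : MonoidAlgebra F G}
    (hx : ∀ t ∈ T, single t 1 * x = x) : hat F T * x = x := by
  have hterm : ∀ g : G, (if g ∈ T then of F G g else 0) * x = if g ∈ T then x else 0 := by
    intro g
    split_ifs with hg
    · rw [of_apply, hx g hg]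
    · rw [zero_mul]
  rw [hat, smul_mul_assoc, sum_mul, sum_congr rfl fun g _ => hterm g, ← sum_filter, sum_const,
    ← Nat.cast_smul_eq_nsmul F, smul_smul, ← Fintype.card_subtype, ← Nat.card_eq_fintype_card]
  exact (inv_mul_cancel₀ hT).symm ▸ one_smul F x

lemma mul_hat_eq_self {T : Subgroup G} (hT : (Nat.card T : F) ≠ 0) {x : MonoidAlgebra F G}
    (hx : ∀ t ∈ T, x * single t 1 = x) : x * hat F T = x := by
  have hterm : ∀ g : G, x * (if g ∈ T then of F G g else 0) = if g ∈ T then x else 0 := by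
    intro g
    split_ifs with hg
    · rw [of_apply, hx g hg]
    · rw [mul_zero]
  rw [hat, mul_smul_comm, mul_sum, sum_congr rfl fun g _ => hterm g, ← sum_filter, sum_const,
    ← Nat.cast_smul_eq_nsmul F, smul_smul, ← Fintype.card_subtype, ← Nat.card_eq_fintype_card]
  exact (inv_mul_cancel₀ hT).symm ▸ one_smul F x

lemma single_mul_hat {S : Subgroup G} {k : G} (hk : k ∈ S) :
    single k (1 : F) * hat F S = hat F S := by
  ext x
  rw [coeff_single_mul_apply, one_mul, coeff_hat, coeff_hat, S.mul_mem_cancel_left (S.inv_mem hk)]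

lemma hat_mul_single {S : Subgroup G} {k : G} (hk : k ∈ S) :
    hat F S * single k (1 : F) = hat F S := by
  ext x
  rw [coeff_mul_single_apply, mul_one, coeff_hat, coeff_hat, S.mul_mem_cancel_right (S.inv_mem hk)]

lemma hat_mul_hat_eq_right {T S : Subgroup G} (hTS : T ≤ S) (hT : (Nat.card T : F) ≠ 0) :
    hat F T * hat F S = hat F S :=
  hat_mul_eq_self hT fun _ ht => single_mul_hat (hTS ht)

lemma hat_mul_hat_eq_left {T S : Subgroup G} (hTS : T ≤ S) (hT : (Nat.card T : F) ≠ 0) :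
    hat F S * hat F T = hat F S :=
  mul_hat_eq_self hT fun _ ht => hat_mul_single (hTS ht)

lemma coeff_eq_of_mul_hat_eq_self {S : Subgroup G} {α : MonoidAlgebra F G}
    (hα : α * hat F S = α) {x y : G} (hxy : x⁻¹ * y ∈ S) : α.coeff y = α.coeff x := by
  have hαs : α * single (x⁻¹ * y) 1 = α := by rw [← hα, mul_assoc, hat_mul_single hxy]
  conv_lhs => rw [← hαs]
  rw [coeff_mul_single_apply, mul_one, mul_inv_rev, inv_inv, mul_inv_cancel_left]

lemma eq_smul_single_mul_hat_of_support {H : Subgroup G} (hH : (Nat.card H : F) ≠ 0)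
    {α : MonoidAlgebra F G} (hα : α * hat F H = α) {x : G}
    (hsupp : ∀ y ∈ α.coeff.support, x⁻¹ * y ∈ H) :
    α = (α.coeff x * Nat.card H) • (single x 1 * hat F H) := by
  ext y
  rw [coeff_smul_apply, coeff_single_mul_apply, one_mul, coeff_hat, smul_eq_mul]
  split_ifs with hy
  · rw [coeff_eq_of_mul_hat_eq_self hα hy, mul_assoc, mul_inv_cancel₀ hH, mul_one]
  · rw [mul_zero]
    by_contra h
    exact hy (hsupp y (Finsupp.mem_support_iff.mpr h))

lemma two_mul_card_le_wt {H K : Subgroup G} (hH : (Nat.card H : F) ≠ 0)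
    (hK : (Nat.card K : F) ≠ 0) (hHK : H ≤ K) {α : MonoidAlgebra F G}
    (hαH : α * hat F H = α) (hαK : α * hat F K = 0) (hα : α ≠ 0) :
    2 * Nat.card H ≤ wt α := by
  have hcoset : ∀ z ∈ α.coeff.support, leftCosetFinset H z ⊆ α.coeff.support := by
    intro z hz y hy
    rw [Finsupp.mem_support_iff, coeff_eq_of_mul_hat_eq_self hαH (mem_leftCosetFinset.mp hy)]
    exact Finsupp.mem_support_iff.mp hz
  obtain ⟨x, hx⟩ := Finsupp.support_nonempty_iff.mpr (coeff_eq_zero.not.mpr hα)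
  obtain ⟨y, hy, hxy⟩ : ∃ y ∈ α.coeff.support, x⁻¹ * y ∉ H := by
    by_contra! hsupp
    have hαx := congrArg (fun β : MonoidAlgebra F G => (β * hat F K).coeff x)
      (eq_smul_single_mul_hat_of_support hH hαH hsupp)
    simp only [hαK, smul_mul_assoc, mul_assoc, hat_mul_hat_eq_right hHK hH, coeff_zero,
      Finsupp.zero_apply, coeff_smul_apply, coeff_single_mul_apply, inv_mul_cancel, coeff_hat,
      K.one_mem, if_true, one_mul, smul_eq_mul] at hαx
    exact mul_ne_zero (Finsupp.mem_support_iff.mp hx) (mul_ne_zero hH (inv_ne_zero hK)) hαx.symm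
  have hdisj : Disjoint (leftCosetFinset H x) (leftCosetFinset H y) := by
    refine disjoint_left.mpr fun w hxw hyw => hxy ?_
    simpa [mul_assoc] using
      H.mul_mem (mem_leftCosetFinset.mp hxw) (H.inv_mem (mem_leftCosetFinset.mp hyw))
  calc 2 * Nat.card H = #(leftCosetFinset H x ∪ leftCosetFinset H y) := by
        rw [card_union_of_disjoint hdisj, card_leftCosetFinset, card_leftCosetFinset, two_mul]
    _ ≤ wt α := card_le_card (union_subset (hcoset x hx) (hcoset y hy))

lemma mul_hat_of_mem_span_hat_sub_hat {H K : Subgroup G} (hH : (Nat.card H : F) ≠ 0)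
    (hK : (Nat.card K : F) ≠ 0) (hHK : H ≤ K) {α : MonoidAlgebra F G}
    (hα : α ∈ Ideal.span {hat F H - hat F K}) : α * hat F H = α ∧ α * hat F K = 0 := by
  obtain ⟨β, rfl⟩ := Submodule.mem_span_singleton.mp hα
  rw [smul_eq_mul, mul_assoc, mul_assoc, sub_mul, sub_mul, hat_mul_hat_eq_right le_rfl hH,
    hat_mul_hat_eq_left hHK hH, hat_mul_hat_eq_right hHK hH, hat_mul_hat_eq_right le_rfl hK,
    sub_self, mul_zero]
  exact ⟨rfl, rfl⟩

lemma hat_sub_single_mul_hat_mem_span {H K : Subgroup G} {k : G} (hk : k ∈ K) :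
    hat F H - single k 1 * hat F H ∈ Ideal.span {hat F H - hat F K} := by
  have hfactor : (1 - single k 1) * (hat F H - hat F K) = hat F H - single k 1 * hat F H := by
    rw [sub_mul, one_mul, mul_sub, single_mul_hat hk]
    abel
  exact hfactor ▸ Ideal.mul_mem_left _ _ (Ideal.subset_span rfl)

lemma hat_sub_single_mul_hat_ne_zero {H : Subgroup G} (hH : (Nat.card H : F) ≠ 0) {k : G}
    (hk : k ∉ H) : hat F H - single k (1 : F) * hat F H ≠ 0 := by
  intro h
  have h1 := congrArg (fun β : MonoidAlgebra F G => β.coeff 1) h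
  simp only [coeff_sub, Finsupp.sub_apply, coeff_single_mul_apply, coeff_hat, H.one_mem,
    mul_one, H.inv_mem_iff, hk, if_true, if_false, one_mul, sub_zero, coeff_zero,
    Finsupp.zero_apply] at h1
  exact inv_ne_zero hH h1

lemma wt_hat_sub_single_mul_hat_le {H : Subgroup G} (hH : (Nat.card H : F) ≠ 0) (k : G) :
    wt (hat F H - single k (1 : F) * hat F H) ≤ 2 * Nat.card H :=
  calc wt (hat F H - single k 1 * hat F H) ≤ wt (hat F H) + wt (single k 1 * hat F H) :=
        wt_sub_le _ _
    _ = 2 * Nat.card H := by rw [wt_single_one_mul, wt_hat hH, two_mul]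

end GroupAlgebra

theorem stmt2 {F : Type*} [Field F] {G : Type*} [Group G] [Fintype G]
    (hchar : (Fintype.card G : F) ≠ 0)
    (H K : Subgroup G) (hHK : H ≤ K) (hne : H ≠ K) :
    IsLeast {n : ℕ | ∃ α ∈ Ideal.span {hat F H - hat F K}, α ≠ 0 ∧ wt α = n}
      (2 * Nat.card H) := by
  have hH := natCast_card_subgroup_ne_zero hchar H
  have hK := natCast_card_subgroup_ne_zero hchar K
  have hlower : ∀ α ∈ Ideal.span {hat F H - hat F K}, α ≠ 0 → 2 * Nat.card H ≤ wt α :=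
    fun α hα hα0 =>
      have ⟨hαH, hαK⟩ := mul_hat_of_mem_span_hat_sub_hat hH hK hHK hα
      two_mul_card_le_wt hH hK hHK hαH hαK hα0
  obtain ⟨k, hkK, hkH⟩ := SetLike.exists_of_lt (lt_of_le_of_ne hHK hne)
  have hmem := hat_sub_single_mul_hat_mem_span (F := F) (H := H) hkK
  have hne0 := hat_sub_single_mul_hat_ne_zero hH hkH
  exact ⟨⟨_, hmem, hne0,
      le_antisymm (wt_hat_sub_single_mul_hat_le hH k) (hlower _ hmem hne0)⟩,
    fun n ⟨α, hα, hα0, hn⟩ => hn ▸ hlower α hα hα0⟩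
end

section
/- Let D be the dihedral group of order 2p^m, F a field with char(F) ∤ 2p^m, e = e_j = Ĥ_j − Ĥ_{j−1} for some 1 ≤ j ≤ m. Define e₁₁ = ((1+b)/2)e, e₁₂ = ((1+b)/2)a((1−b)/2)e, e₂₂ = ((1−b)/2)e, and suppose (a − a^{-1})e is invertible in the ring (FD)e with inverse u; set e₂₁ = 4u²((1−b)/2)a((1+b)/2)e. Then e₁₁ + e₂₂ = e and e_{ij}e_{hk} = δ_{jh} e_{ik} for all i,j,h,k ∈ {1,2}. -/
open scoped Classical

/-
`f = (1 + b)/2` and `g = (1 - b)/2` are complementary idempotents and `e` is a central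
idempotent (`Ĥ` is central for normal `H`), so `fe` and `ge` are orthogonal idempotents with
sum `e`, and `e₁₂ ∈ fe·FD·ge`, `e₂₁ ∈ ge·FD·fe`. The matrix-unit relations then reduce to
`e₁₂e₂₁ = fe` and `e₂₁e₁₂ = ge`. Both follow from `f a g a f = ¼ (a - a⁻¹)² f` (and its
mirror under `b ↦ -b`): since `b` anticommutes with `w = (a - a⁻¹)e`, the inverse `u²` of `w²`
in `(FD)e` commutes with `a` and `b`, hence `4u² · f a g a f · e = u² w² f = fe`.
-/

section Hat

open MonoidAlgebra

variable {F : Type*} [Field F] {G : Type*} [Group G] [Fintype G]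

theorem sum_ite_mem_eq_card_smul {M : Type*} [AddCommMonoid M] [Module F M] (S : Subgroup G)
    (x : M) : ∑ g : G, (if g ∈ S then x else 0) = (Nat.card S : F) • x := by
  rw [Finset.sum_ite, Finset.sum_const_zero, add_zero, Finset.sum_const, Nat.cast_smul_eq_nsmul,
    Nat.card_eq_fintype_card, Fintype.card_subtype]

theorem of_mul_hat {S : Subgroup G} {g : G} (hg : g ∈ S) : of F G g * hat F S = hat F S := by
  rw [hat, mul_smul_comm, Finset.mul_sum]
  congr 1
  refine Fintype.sum_bijective (g * ·) (Group.mulLeft_bijective g) _ _ fun h => ?_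
  by_cases hh : h ∈ S
  · rw [if_pos hh, if_pos (mul_mem hg hh), ← map_mul]
  · rw [if_neg hh, if_neg fun hgh => hh (by simpa using mul_mem (inv_mem hg) hgh), mul_zero]

theorem hat_mul_hat_of_le {S T : Subgroup G} (hST : S ≤ T) (hS : (Nat.card S : F) ≠ 0) :
    hat F S * hat F T = hat F T := by
  conv_lhs => rw [hat]
  have hterm : ∀ g, (if g ∈ S then of F G g else 0) * hat F T = if g ∈ S then hat F T else 0 :=
    fun g => by split_ifs with hg; exacts [of_mul_hat (hST hg), zero_mul _]
  rw [smul_mul_assoc, Finset.sum_mul, Finset.sum_congr rfl fun g _ => hterm g,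
    sum_ite_mem_eq_card_smul (F := F), smul_smul, inv_mul_cancel₀ hS, one_smul]

theorem commute_of_hat (S : Subgroup G) [hS : S.Normal] (x : G) :
    Commute (of F G x) (hat F S) := by
  rw [Commute, SemiconjBy, hat, mul_smul_comm, smul_mul_assoc, Finset.mul_sum, Finset.sum_mul]
  congr 1
  refine Fintype.sum_equiv (MulAut.conj x).toEquiv _ _ fun g => ?_
  simp only [MulEquiv.toEquiv_eq_coe, MulEquiv.coe_toEquiv, MulAut.conj_apply,
    hS.mem_comm_iff (a := x * g), inv_mul_cancel_left]
  split_ifs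
  · rw [← map_mul, ← map_mul, inv_mul_cancel_right]
  · rw [mul_zero, zero_mul]

theorem commute_hat (S : Subgroup G) [S.Normal] (x : MonoidAlgebra F G) :
    Commute (hat F S) x := by
  induction x using MonoidAlgebra.induction_on with
  | of g => exact (commute_of_hat S g).symm
  | add x y hx hy => exact hx.add_right hy
  | smul r x hx => exact hx.smul_right r

theorem isIdempotentElem_hat_sub_hat {S T : Subgroup G} [T.Normal] (hST : S ≤ T)
    (hT : (Nat.card T : F) ≠ 0) : IsIdempotentElem (hat F S - hat F T) := by
  have hS : (Nat.card S : F) ≠ 0 :=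
    ne_zero_of_dvd_ne_zero hT (Nat.cast_dvd_cast (Subgroup.card_dvd_of_le hST))
  refine IsIdempotentElem.sub (hat_mul_hat_of_le le_rfl hT) (hat_mul_hat_of_le le_rfl hS) ?_ ?_
  · rw [(commute_hat T _).eq, hat_mul_hat_of_le hST hS]
  · exact hat_mul_hat_of_le hST hS

end Hat

open DihedralGroup in
theorem DihedralGroup.normal_zpowers_r {n : ℕ} (i : ZMod n) :
    (Subgroup.zpowers (r i)).Normal := by
  refine ⟨fun x hx g => ?_⟩
  obtain ⟨k, rfl⟩ := Subgroup.mem_zpowers_iff.mp hx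
  rw [← conj_zpow]
  refine zpow_mem ?_ k
  rcases g with j | j
  · rw [inv_r, r_mul_r, r_mul_r, add_neg_cancel_comm]
    exact Subgroup.mem_zpowers _
  · rw [inv_sr, sr_mul_r, sr_mul_sr, sub_add_cancel_left, ← inv_r]
    exact inv_mem (Subgroup.mem_zpowers _)

theorem Subgroup.zpowers_pow_le_of_dvd {G : Type*} [Group G] (x : G) {k l : ℕ} (h : k ∣ l) :
    Subgroup.zpowers (x ^ l) ≤ Subgroup.zpowers (x ^ k) := by
  obtain ⟨d, rfl⟩ := h
  rw [Subgroup.zpowers_le, pow_mul]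
  exact pow_mem (Subgroup.mem_zpowers _) d

def IsMatrixUnits {n A : Type*} [Mul A] [Zero A] [DecidableEq n] (E : Matrix n n A) : Prop :=
  ∀ i j h k, E i j * E h k = if j = h then E i k else 0

section MatrixUnits

variable {A : Type*} [Semiring A]

theorem isMatrixUnits_fin_two {E₁₁ E₁₂ E₂₁ E₂₂ : A}
    (h₁₁₂₂ : E₁₁ * E₂₂ = 0) (h₂₂₁₁ : E₂₂ * E₁₁ = 0)
    (h₁₂_left : E₁₁ * E₁₂ = E₁₂) (h₁₂_right : E₁₂ * E₂₂ = E₁₂)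
    (h₂₁_left : E₂₂ * E₂₁ = E₂₁) (h₂₁_right : E₂₁ * E₁₁ = E₂₁)
    (h₁₂₂₁ : E₁₂ * E₂₁ = E₁₁) (h₂₁₁₂ : E₂₁ * E₁₂ = E₂₂) :
    IsMatrixUnits !![E₁₁, E₁₂; E₂₁, E₂₂] := by
  have h₁₁₁₁ : E₁₁ * E₁₁ = E₁₁ := by
    rw [← h₁₂₂₁, mul_assoc, ← mul_assoc E₂₁, h₂₁₁₂, ← mul_assoc, h₁₂_right]
  have h₂₂₂₂ : E₂₂ * E₂₂ = E₂₂ := by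
    rw [← h₂₁₁₂, mul_assoc, ← mul_assoc E₁₂, h₁₂₂₁, ← mul_assoc, h₂₁_right]
  have h₁₁₂₁ : E₁₁ * E₂₁ = 0 := by rw [← h₂₁_left, ← mul_assoc, h₁₁₂₂, zero_mul]
  have h₂₂₁₂ : E₂₂ * E₁₂ = 0 := by rw [← h₁₂_left, ← mul_assoc, h₂₂₁₁, zero_mul]
  have h₁₂₁₁ : E₁₂ * E₁₁ = 0 := by rw [← h₁₂_right, mul_assoc, h₂₂₁₁, mul_zero]
  have h₂₁₂₂ : E₂₁ * E₂₂ = 0 := by rw [← h₂₁_right, mul_assoc, h₁₁₂₂, mul_zero]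
  have h₁₂₁₂ : E₁₂ * E₁₂ = 0 := by nth_rw 1 [← h₁₂_right]; rw [mul_assoc, h₂₂₁₂, mul_zero]
  have h₂₁₂₁ : E₂₁ * E₂₁ = 0 := by nth_rw 1 [← h₂₁_right]; rw [mul_assoc, h₁₁₂₁, mul_zero]
  intro i j h k
  fin_cases i <;> fin_cases j <;> fin_cases h <;> fin_cases k <;>
    simp [h₁₁₁₁, h₁₁₂₁, h₁₁₂₂, h₁₂₁₁, h₁₂₁₂, h₁₂₂₁, h₁₂_left, h₁₂_right,
      h₂₁₁₂, h₂₁₂₁, h₂₁₂₂, h₂₁_left, h₂₁_right, h₂₂₁₁, h₂₂₁₂, h₂₂₂₂]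

theorem isMatrixUnits_fin_two_of_idempotents {f g e x y : A} (hf : IsIdempotentElem f)
    (hg : IsIdempotentElem g) (hfg : f * g = 0) (hgf : g * f = 0) (he : IsIdempotentElem e)
    (hef : Commute e f) (heg : Commute e g) (hex : Commute e x) (hey : Commute e y)
    (hxy : f * x * g * y * f * e = f * e) (hyx : g * y * f * x * g * e = g * e) :
    IsMatrixUnits !![f * e, f * x * g * e; g * y * f * e, g * e] := by
  apply isMatrixUnits_fin_two <;>
    simp only [← mul_assoc, hef.right_comm, heg.right_comm, hex.right_comm, hey.right_comm,
      he.mul_mul_self, hf.mul_mul_self, hg.mul_mul_self, hf.eq, hg.eq, hfg, hgf,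
      zero_mul, hxy, hyx]

end MatrixUnits

def IsCornerInverse {M : Type*} [Monoid M] (e w u : M) : Prop :=
  u * e = u ∧ w * u = e ∧ u * w = e

namespace IsCornerInverse

variable {M : Type*} [Monoid M] {e w u x : M}

theorem identity_mul (h : IsCornerInverse e w u) : e * u = u := by
  obtain ⟨hue, hwu, huw⟩ := h
  rw [← huw, mul_assoc, hwu, hue]

theorem commute (h : IsCornerInverse e w u) (hxe : Commute x e) (hxw : Commute x w) :
    Commute x u :=
  calc x * u = x * e * u := by rw [mul_assoc, h.identity_mul]
    _ = u * w * x * u := by rw [hxe.eq, h.2.2]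
    _ = u * x * (w * u) := by rw [mul_assoc u, ← hxw.eq]; simp only [mul_assoc]
    _ = u * x := by rw [h.2.1, mul_assoc, hxe.eq, ← mul_assoc, h.1]

theorem mul_self (h : IsCornerInverse e w u) (hw : w * e = w) :
    IsCornerInverse e (w * w) (u * u) := by
  obtain ⟨hue, hwu, huw⟩ := h
  refine ⟨by rw [mul_assoc, hue], ?_, ?_⟩
  · rw [mul_assoc, ← mul_assoc w u u, hwu, ← mul_assoc, hw, hwu]
  · rw [mul_assoc, ← mul_assoc u w, huw, ← mul_assoc, hue, huw]

end IsCornerInverse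

section Algebra

variable {F A : Type*} [Field F] [Ring A] [Algebra F A]

theorem projection_sandwich {a b c : A} (hac : a * c = 1) (hca : c * a = 1) (hbb : b * b = 1)
    (hba : b * a = c * b) :
    (2 : F)⁻¹ • (1 + b) * a * ((2 : F)⁻¹ • (1 - b)) * a * ((2 : F)⁻¹ • (1 + b)) =
      (4 : F)⁻¹ • ((a - c) * (a - c)) * ((2 : F)⁻¹ • (1 + b)) := by
  have hac' : ∀ x, a * (c * x) = x := fun x => by rw [← mul_assoc, hac, one_mul]
  rw [show (4 : F)⁻¹ = 2⁻¹ * 2⁻¹ by rw [← mul_inv]; norm_num]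
  simp only [smul_mul_assoc, mul_smul_comm, add_mul, mul_add, sub_mul, mul_sub,
    one_mul, mul_one, mul_assoc, hbb, hba, hac, hca, hac']
  module

theorem corner_projection_sandwich {a b c e u : A} (h2 : (2 : F) ≠ 0) (hac : a * c = 1)
    (hca : c * a = 1) (hbb : b * b = 1) (hba : b * a = c * b) (he : IsIdempotentElem e)
    (he_comm : ∀ x, Commute e x) (hu : IsCornerInverse e ((a - c) * e) u) :
    (4 : F) • (u * u) * ((2 : F)⁻¹ • (1 + b) * a * ((2 : F)⁻¹ • (1 - b)) * a *
      ((2 : F)⁻¹ • (1 + b))) * e = (2 : F)⁻¹ • (1 + b) * e := by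
  have h4 : (4 : F) ≠ 0 := by
    rw [show (4 : F) = 2 * 2 by norm_num]; exact mul_ne_zero h2 h2
  have hww : (a - c) * e * ((a - c) * e) = (a - c) * (a - c) * e := by
    rw [mul_assoc, (he_comm (a - c)).left_comm, he.eq, ← mul_assoc]
  rw [projection_sandwich hac hca hbb hba]
  have hef := he_comm ((2 : F)⁻¹ • (1 + b))
  generalize (2 : F)⁻¹ • (1 + b) = f at hef ⊢
  calc (4 : F) • (u * u) * ((4 : F)⁻¹ • ((a - c) * (a - c)) * f) * e
      = u * u * ((a - c) * (a - c) * e) * f := by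
        simp only [smul_mul_assoc, mul_smul_comm, smul_smul, inv_mul_cancel₀ h4, one_smul,
          mul_assoc, hef.symm.eq]
    _ = f * e := by
      rw [← hww, (hu.mul_self (by rw [mul_assoc, he.eq])).2.2, hef.eq]

theorem commute_mul_self_of_isCornerInverse {a b c e u : A} (hac : a * c = 1) (hca : c * a = 1)
    (hba : b * a = c * b) (he : IsIdempotentElem e) (he_comm : ∀ x, Commute e x)
    (hu : IsCornerInverse e ((a - c) * e) u) :
    Commute a (u * u) ∧ Commute b (u * u) := by
  have hbc : b * c = a * b :=
    calc b * c = a * (c * b) * c := by rw [← mul_assoc, hac, one_mul]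
      _ = a * b := by rw [← hba, mul_assoc, mul_assoc, hac, mul_one]
  have hbac : b * (a - c) = -((a - c) * b) := by rw [mul_sub, sub_mul, hba, hbc, neg_sub]
  have haw : Commute a ((a - c) * e) :=
    ((Commute.refl a).sub_right (hac.trans hca.symm)).mul_right (he_comm a).symm
  have hbw : SemiconjBy b ((a - c) * e) (-((a - c) * e)) := by
    rw [SemiconjBy, ← mul_assoc, hbac, neg_mul, neg_mul, mul_assoc, mul_assoc, (he_comm b).eq]
  have hbww : Commute b ((a - c) * e * ((a - c) * e)) := by
    have := hbw.mul_right hbw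
    rwa [neg_mul_neg] at this
  have huu := hu.mul_self (by rw [mul_assoc, he.eq])
  exact ⟨huu.commute (he_comm a).symm (haw.mul_right haw), huu.commute (he_comm b).symm hbww⟩

theorem isMatrixUnits_of_dihedral {a b c e u : A} (h2 : (2 : F) ≠ 0) (hac : a * c = 1)
    (hca : c * a = 1) (hbb : b * b = 1) (hba : b * a = c * b) (he : IsIdempotentElem e)
    (he_comm : ∀ x, Commute e x) (hu : IsCornerInverse e ((a - c) * e) u) :
    (2 : F)⁻¹ • (1 + b) * e + (2 : F)⁻¹ • (1 - b) * e = e ∧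
      IsMatrixUnits !![(2 : F)⁻¹ • (1 + b) * e,
        (2 : F)⁻¹ • (1 + b) * a * ((2 : F)⁻¹ • (1 - b)) * e;
        (4 : F) • (u * u) * ((2 : F)⁻¹ • (1 - b) * a * ((2 : F)⁻¹ • (1 + b) * e)),
        (2 : F)⁻¹ • (1 - b) * e] := by
  have hfg1 : (2 : F)⁻¹ • (1 + b) + (2 : F)⁻¹ • (1 - b) = 1 := by
    rw [← smul_add, add_add_sub_cancel, ← two_smul F, smul_smul, inv_mul_cancel₀ h2, one_smul]
  have hfg : (2 : F)⁻¹ • (1 + b) * ((2 : F)⁻¹ • (1 - b)) = 0 := by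
    rw [smul_mul_smul_comm, ← (Commute.one_left b).mul_self_sub_mul_self_eq, hbb, mul_one,
      sub_self, smul_zero]
  have hgf : (2 : F)⁻¹ • (1 - b) * ((2 : F)⁻¹ • (1 + b)) = 0 := by
    rw [smul_mul_smul_comm, ← (Commute.one_left b).mul_self_sub_mul_self_eq', hbb, mul_one,
      sub_self, smul_zero]
  have hf_sandwich := corner_projection_sandwich h2 hac hca hbb hba he he_comm hu
  have hg_sandwich := corner_projection_sandwich (b := -b) h2 hac hca (by rw [neg_mul_neg, hbb])
    (by rw [neg_mul, hba, mul_neg]) he he_comm hu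
  rw [← sub_eq_add_neg, sub_neg_eq_add] at hg_sandwich
  obtain ⟨hau, hbu⟩ := commute_mul_self_of_isCornerInverse hac hca hba he he_comm hu
  have hfv : Commute ((2 : F)⁻¹ • (1 + b)) ((4 : F) • (u * u)) :=
    (((Commute.one_left _).add_left hbu).smul_left _).smul_right _
  have hgv : Commute ((2 : F)⁻¹ • (1 - b)) ((4 : F) • (u * u)) :=
    (((Commute.one_left _).sub_left hbu).smul_left _).smul_right _
  have hav : Commute a ((4 : F) • (u * u)) := hau.smul_right _
  generalize (2 : F)⁻¹ • (1 + b) = f at *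
  generalize (2 : F)⁻¹ • (1 - b) = g at *
  generalize (4 : F) • (u * u) = v at *
  obtain ⟨hf, hg⟩ := IsIdempotentElem.of_mul_add hfg hfg1
  refine ⟨by rw [← add_mul, hfg1, one_mul], ?_⟩
  rw [show v * (g * a * (f * e)) = g * (v * a) * f * e by simp only [← mul_assoc, ← hgv.eq]]
  refine isMatrixUnits_fin_two_of_idempotents hf hg hfg hgf he (he_comm f) (he_comm g)
    (he_comm a) (he_comm _) ?_ ?_
  · rw [← hf_sandwich]
    simp only [← mul_assoc, hgv.right_comm, hav.right_comm, hfv.eq]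
  · rw [← hg_sandwich]
    simp only [← mul_assoc, hgv.eq]

end Algebra

theorem stmt7_general {F : Type*} [Field F] (p m j : ℕ) (hchar : ((2 * p ^ m : ℕ) : F) ≠ 0)
    [NeZero (p ^ m)]
    (a b e e₁₁ e₁₂ e₂₁ e₂₂ u : MonoidAlgebra F (DihedralGroup (p ^ m)))
    (ha : a = MonoidAlgebra.of F _ (DihedralGroup.r 1))
    (hb : b = MonoidAlgebra.of F _ (DihedralGroup.sr 0))
    (he : e = hat F (Subgroup.zpowers (DihedralGroup.r 1 ^ p ^ j)) -
        hat F (Subgroup.zpowers (DihedralGroup.r 1 ^ p ^ (j - 1))))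
    (he11 : e₁₁ = ((2 : F)⁻¹ • (1 + b)) * e)
    (he12 : e₁₂ = ((2 : F)⁻¹ • (1 + b)) * a * ((2 : F)⁻¹ • (1 - b)) * e)
    (he22 : e₂₂ = ((2 : F)⁻¹ • (1 - b)) * e)
    -- `u` is the inverse of `(a - a⁻¹)e` in the ring `(FD)e` (with identity `e`)
    (hu : u * e = u ∧ ((a - MonoidAlgebra.of F _ (DihedralGroup.r 1)⁻¹) * e) * u = e ∧
      u * ((a - MonoidAlgebra.of F _ (DihedralGroup.r 1)⁻¹) * e) = e)
    (he21 : e₂₁ = (4 : F) • (u * u) * (((2 : F)⁻¹ • (1 - b)) * a *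
        (((2 : F)⁻¹ • (1 + b)) * e))) :
    e₁₁ + e₂₂ = e ∧
      ∀ i j h k : Fin 2,
        (!![e₁₁, e₁₂; e₂₁, e₂₂]) i j * (!![e₁₁, e₁₂; e₂₁, e₂₂]) h k =
          if j = h then (!![e₁₁, e₁₂; e₂₁, e₂₂]) i k else 0 := by
  have hcard : ∀ S : Subgroup (DihedralGroup (p ^ m)), (Nat.card S : F) ≠ 0 := fun S =>
    ne_zero_of_dvd_ne_zero (by rwa [DihedralGroup.nat_card])
      (Nat.cast_dvd_cast S.card_subgroup_dvd_card)
  have h2 : (2 : F) ≠ 0 := by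
    exact_mod_cast ne_zero_of_dvd_ne_zero hchar (Nat.cast_dvd_cast (dvd_mul_right 2 (p ^ m)))
  have hnormal (k : ℕ) :
      (Subgroup.zpowers (DihedralGroup.r 1 ^ k : DihedralGroup (p ^ m))).Normal := by
    rw [DihedralGroup.r_one_pow]; exact DihedralGroup.normal_zpowers_r _
  have he_idem : IsIdempotentElem e := by
    have := hnormal (p ^ (j - 1))
    exact he ▸ isIdempotentElem_hat_sub_hat
      (Subgroup.zpowers_pow_le_of_dvd _ (pow_dvd_pow p (j.sub_le 1))) (hcard _)
  have he_comm : ∀ x, Commute e x := fun x => by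
    have := hnormal (p ^ j)
    have := hnormal (p ^ (j - 1))
    exact he ▸ (commute_hat _ x).sub_left (commute_hat _ x)
  have hac : a * MonoidAlgebra.of F _ (DihedralGroup.r 1)⁻¹ = 1 := by
    rw [ha, ← map_mul, mul_inv_cancel, map_one]
  have hca : MonoidAlgebra.of F _ (DihedralGroup.r 1)⁻¹ * a = 1 := by
    rw [ha, ← map_mul, inv_mul_cancel, map_one]
  have hbb : b * b = 1 := by rw [hb, ← map_mul, DihedralGroup.sr_mul_self, map_one]
  have hba : b * a = MonoidAlgebra.of F _ (DihedralGroup.r 1)⁻¹ * b := by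
    rw [ha, hb, ← map_mul, ← map_mul, DihedralGroup.inv_r, DihedralGroup.sr_mul_r,
      DihedralGroup.r_mul_sr, zero_add, zero_sub, neg_neg]
  subst he11 he12 he22 he21
  exact isMatrixUnits_of_dihedral h2 hac hca hbb hba he_idem he_comm hu

theorem stmt7 {F : Type*} [Field F] (p m j : ℕ) (hp : p.Prime) (hodd : Odd p)
    (hj : 1 ≤ j) (hjm : j ≤ m) (hchar : ((2 * p ^ m : ℕ) : F) ≠ 0)
    [NeZero (p ^ m)]
    (a b e e₁₁ e₁₂ e₂₁ e₂₂ u : MonoidAlgebra F (DihedralGroup (p ^ m)))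
    (ha : a = MonoidAlgebra.of F _ (DihedralGroup.r 1))
    (hb : b = MonoidAlgebra.of F _ (DihedralGroup.sr 0))
    (he : e = hat F (Subgroup.zpowers (DihedralGroup.r 1 ^ p ^ j)) -
        hat F (Subgroup.zpowers (DihedralGroup.r 1 ^ p ^ (j - 1))))
    (he11 : e₁₁ = ((2 : F)⁻¹ • (1 + b)) * e)
    (he12 : e₁₂ = ((2 : F)⁻¹ • (1 + b)) * a * ((2 : F)⁻¹ • (1 - b)) * e)
    (he22 : e₂₂ = ((2 : F)⁻¹ • (1 - b)) * e)
    -- `u` is the inverse of `(a - a⁻¹)e` in the ring `(FD)e` (with identity `e`)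
    (hu : u * e = u ∧ ((a - MonoidAlgebra.of F _ (DihedralGroup.r 1)⁻¹) * e) * u = e ∧
      u * ((a - MonoidAlgebra.of F _ (DihedralGroup.r 1)⁻¹) * e) = e)
    (he21 : e₂₁ = (4 : F) • (u * u) * (((2 : F)⁻¹ • (1 - b)) * a *
        (((2 : F)⁻¹ • (1 + b)) * e))) :
    e₁₁ + e₂₂ = e ∧
      ∀ i j h k : Fin 2,
        (!![e₁₁, e₁₂; e₂₁, e₂₂]) i j * (!![e₁₁, e₁₂; e₂₁, e₂₂]) h k =
          if j = h then (!![e₁₁, e₁₂; e₂₁, e₂₂]) i k else 0 :=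
  stmt7_general p m j hchar a b e e₁₁ e₁₂ e₂₁ e₂₂ u ha hb he he11 he12 he22 hu he21
end

section
/- Let G = ⟨a, b | a^m = 1 = b^n, bab^{-1} = a^i⟩ be a metacyclic group, F a field with char(F) ∤ |G|, and let C_m × C_n be the direct product of cyclic groups of orders m and n generated by ã and b̃. Let φ: FG → F[C_m × C_n] be the F-linear map induced by a^i b^j ↦ ã^i b̃^j. If e is a central idempotent of FG, then φ(e) is an idempotent of F[C_m × C_n] and φ((FG)e) = F[C_m × C_n]·φ(e). -/
/-!
Write `σ` for the bijection `aˣbʸ ↦ ãˣb̃ʸ`. Since `bʸ aᵘ b⁻ʸ = a^(u iʸ)`, one has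
`σ (g h) = σ g · σ (bʸ h b⁻ʸ)` whenever `g = aˣbʸ`: the bijection is multiplicative up to
conjugating the right-hand factor. The coefficients of a central element `e` are constant on
conjugacy classes, so this twist is invisible when the right-hand factor is `e`, and
`φ (f e) = φ f · φ e` for all `f`. Both claims follow from this and the surjectivity of `φ`.
-/

open MonoidAlgebra

namespace MonoidAlgebra

variable {R G H : Type*} [Semiring R]

lemma coeff_mapDomain_equiv (σ : G ≃ H) (x : R[G]) (z : H) :
    (mapDomain σ x).coeff z = x.coeff (σ.symm z) := by
  simp [mapDomain, Finsupp.mapDomain_equiv_apply]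

lemma mapDomain_equiv_surjective (σ : G ≃ H) :
    Function.Surjective (mapDomain (R := R) σ) :=
  fun w => ⟨mapDomain σ.symm w, by ext z; simp⟩

variable [Group G] [Group H]

lemma coeff_conj_of_forall_mul_comm {e : R[G]} (he : ∀ x, x * e = e * x) (c h : G) :
    e.coeff (c * h * c⁻¹) = e.coeff h := by
  simpa using congr_arg (fun x => x.coeff (c * h)) (he (single c 1)).symm

lemma mapDomain_mul_of_forall_mul_comm (σ : G ≃ H)
    (hσ : ∀ g, ∃ c, ∀ h, σ (g * h) = σ g * σ (c * h * c⁻¹))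
    {e : R[G]} (he : ∀ x, x * e = e * x) (f : R[G]) :
    mapDomain σ (f * e) = mapDomain σ f * mapDomain σ e := by
  induction f using MonoidAlgebra.induction_linear with
  | zero => simp
  | add f₁ f₂ h₁ h₂ => rw [add_mul, mapDomain_add, mapDomain_add, add_mul, h₁, h₂]
  | single g r =>
    obtain ⟨c, hc⟩ := hσ g
    ext z
    obtain ⟨h, rfl⟩ : ∃ h, σ (g * h) = z := ⟨g⁻¹ * σ.symm z, by simp⟩
    rw [mapDomain_single, coeff_mapDomain_equiv, Equiv.symm_apply_apply,
      coeff_single_mul_apply, inv_mul_cancel_left, hc, coeff_single_mul_apply,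
      inv_mul_cancel_left, coeff_mapDomain_equiv, Equiv.symm_apply_apply,
      coeff_conj_of_forall_mul_comm he]

end MonoidAlgebra

lemma LinearMap.map_span_singleton_of_map_mul_right {R A B : Type*} [CommSemiring R]
    [Semiring A] [Semiring B] [Algebra R A] [Algebra R B] (φ : A →ₗ[R] B)
    (hφ : Function.Surjective φ) {e : A} (hmul : ∀ x, φ (x * e) = φ x * φ e) :
    ((Ideal.span {e}).restrictScalars R).map φ = (Ideal.span {φ e}).restrictScalars R := by
  ext z
  simp only [Submodule.mem_map, Submodule.restrictScalars_mem, Ideal.mem_span_singleton']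
  constructor
  · rintro ⟨_, ⟨x, rfl⟩, rfl⟩
    exact ⟨φ x, (hmul x).symm⟩
  · rintro ⟨w, rfl⟩
    obtain ⟨x, rfl⟩ := hφ w
    exact ⟨x * e, ⟨x, rfl⟩, hmul x⟩

section Metacyclic

variable {G : Type*} [Group G] {a b : G} {i : ℕ}

lemma conj_pow_pow_of_conj_eq_pow (hconj : b * a * b⁻¹ = a ^ i) (y u : ℕ) :
    b ^ y * a ^ u * (b ^ y)⁻¹ = a ^ (u * i ^ y) := by
  induction y generalizing u with
  | zero => simp
  | succ y ih =>
    calc b ^ (y + 1) * a ^ u * (b ^ (y + 1))⁻¹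
        = b ^ y * (b * a ^ u * b⁻¹) * (b ^ y)⁻¹ := by group
      _ = a ^ (u * i ^ (y + 1)) := by
        rw [← conj_pow, hconj, ← pow_mul, ih, mul_comm i, mul_assoc, ← pow_succ']

lemma pow_mul_pow_mul_pow_mul_pow_of_conj_eq_pow (hconj : b * a * b⁻¹ = a ^ i)
    (x y u v : ℕ) :
    a ^ x * b ^ y * (a ^ u * b ^ v) = a ^ (x + u * i ^ y) * b ^ (y + v) :=
  calc a ^ x * b ^ y * (a ^ u * b ^ v)
      = a ^ x * (b ^ y * a ^ u * (b ^ y)⁻¹) * (b ^ y * b ^ v) := by group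
    _ = a ^ (x + u * i ^ y) * b ^ (y + v) := by
      rw [conj_pow_pow_of_conj_eq_pow hconj, ← pow_add, ← pow_add]

variable {m n : ℕ} [NeZero m] [NeZero n] {σ : G ≃ Multiplicative (ZMod m × ZMod n)}

lemma exists_pow_mul_pow_eq (hσ : ∀ x y : ℕ, σ (a ^ x * b ^ y) =
      Multiplicative.ofAdd ((x : ZMod m), (y : ZMod n))) (g : G) :
    ∃ x y : ℕ, a ^ x * b ^ y = g :=
  ⟨(σ g).toAdd.1.val, (σ g).toAdd.2.val, σ.injective <| by simp [hσ]⟩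

lemma apply_mul_eq_mul_apply_conj (hconj : b * a * b⁻¹ = a ^ i)
    (hσ : ∀ x y : ℕ, σ (a ^ x * b ^ y) =
      Multiplicative.ofAdd ((x : ZMod m), (y : ZMod n))) (g : G) :
    ∃ c, ∀ h, σ (g * h) = σ g * σ (c * h * c⁻¹) := by
  obtain ⟨x, y, rfl⟩ := exists_pow_mul_pow_eq hσ g
  refine ⟨b ^ y, fun h => ?_⟩
  obtain ⟨u, v, rfl⟩ := exists_pow_mul_pow_eq hσ h
  have hconj_h : b ^ y * (a ^ u * b ^ v) * (b ^ y)⁻¹ = a ^ (u * i ^ y) * b ^ v := by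
    rw [← conj_pow_pow_of_conj_eq_pow hconj]; group
  rw [pow_mul_pow_mul_pow_mul_pow_of_conj_eq_pow hconj, hconj_h, hσ, hσ, hσ, ← ofAdd_add]
  congr 1
  ext <;> simp

end Metacyclic

theorem stmt11_general {F : Type*} [Field F] {G : Type*} [Group G] [Fintype G]
    (m n i : ℕ) (a b : G)
    (hconj : b * a * b⁻¹ = a ^ i)
    -- the bijection `aˣbʸ ↦ ãˣb̃ʸ` onto the abelian group `C_m × C_n`
    (σ : G ≃ Multiplicative (ZMod m × ZMod n))
    (hσ : ∀ x y : ℕ, σ (a ^ x * b ^ y) =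
      Multiplicative.ofAdd ((x : ZMod m), (y : ZMod n)))
    (e : MonoidAlgebra F G) (hidem : e * e = e)
    (hcentral : ∀ x : MonoidAlgebra F G, x * e = e * x) :
    let φ : MonoidAlgebra F G →ₗ[F]
        MonoidAlgebra F (Multiplicative (ZMod m × ZMod n)) :=
      MonoidAlgebra.mapDomainLinearMap F F σ
    φ e * φ e = φ e ∧
      Submodule.map φ (Submodule.restrictScalars F (Ideal.span {e})) =
        Submodule.restrictScalars F (Ideal.span {φ e}) := by
  intro φ
  have : Finite (ZMod m × ZMod n) := Finite.of_equiv G σ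
  have : NeZero m := ⟨by rintro rfl; exact not_finite (ZMod 0 × ZMod n)⟩
  have : NeZero n := ⟨by rintro rfl; exact not_finite (ZMod m × ZMod 0)⟩
  have hmul : ∀ f, φ (f * e) = φ f * φ e :=
    mapDomain_mul_of_forall_mul_comm σ (apply_mul_eq_mul_apply_conj hconj hσ) hcentral
  exact ⟨by rw [← hmul, hidem],
    φ.map_span_singleton_of_map_mul_right (mapDomain_equiv_surjective σ) hmul⟩

theorem stmt11 {F : Type*} [Field F] {G : Type*} [Group G] [Fintype G]
    (hchar : (Fintype.card G : F) ≠ 0)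
    (m n i : ℕ) (a b : G)
    (ham : a ^ m = 1) (hbn : b ^ n = 1) (hconj : b * a * b⁻¹ = a ^ i)
    -- the bijection `aˣbʸ ↦ ãˣb̃ʸ` onto the abelian group `C_m × C_n`
    (σ : G ≃ Multiplicative (ZMod m × ZMod n))
    (hσ : ∀ x y : ℕ, σ (a ^ x * b ^ y) =
      Multiplicative.ofAdd ((x : ZMod m), (y : ZMod n)))
    (e : MonoidAlgebra F G) (hidem : e * e = e)
    (hcentral : ∀ x : MonoidAlgebra F G, x * e = e * x) :
    let φ : MonoidAlgebra F G →ₗ[F]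
        MonoidAlgebra F (Multiplicative (ZMod m × ZMod n)) :=
      MonoidAlgebra.mapDomainLinearMap F F σ
    φ e * φ e = φ e ∧
      Submodule.map φ (Submodule.restrictScalars F (Ideal.span {e})) =
        Submodule.restrictScalars F (Ideal.span {φ e}) :=
  stmt11_general m n i a b hconj σ hσ e hidem hcentral
end

section
/- Let p be an odd prime, j ≥ 1, F_q a finite field with q generating the units of Z/p^m, and e = Ĥ_j − Ĥ_{j−1} the primitive idempotent of F_q⟨a⟩ (with a of order p^m, H_j = ⟨a^{p^j}⟩). Then (2 − a + a^{-1})·e ≠ 0 in F_q⟨a⟩. -/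
open scoped Classical

/-!
Evaluate at the character `χ : a ↦ ζ`, where `ζ` is a primitive `p ^ j`-th root of unity in an
algebraic closure of `F = 𝔽_q`: it sends `Ĥ_j` to `1` and `Ĥ_{j-1}` to `0`, hence `e` to `1` and
the product to `2 - ζ + ζ⁻¹`. If this vanished, `ζ` would be a root of `X² - 2X - 1 ∈ F[X]`, so
the Frobenius `x ↦ x ^ q` would at most swap it with the other root `2 - ζ`, giving `ζ ^ q² = ζ`.
Then the order `φ(p ^ j)` of `q` modulo `p ^ j` divides `2`, which leaves only `p ^ j = 3`. There
`ζ² + ζ + 1 = 0` forces `3 ζ + 2 = 0`, so `ζ ∈ F` and `q ≡ 1 [MOD 3]`, contradicting that `q`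
generates `(ℤ/3)ˣ`.
-/

open MonoidAlgebra Subgroup

theorem orderOf_map_eq_card_of_surjective {G H : Type*} [Group G] [Group H] [Finite G]
    {f : G →* H} (hf : Function.Surjective f) {u : G} (hu : orderOf u = Nat.card G) :
    orderOf (f u) = Nat.card H := by
  have hu' : zpowers u = ⊤ := eq_top_of_card_eq _ (by rw [Nat.card_zpowers, hu])
  refine orderOf_eq_card_of_zpowers_eq_top ?_
  rw [← MonoidHom.map_zpowers, hu', ← MonoidHom.range_eq_map, MonoidHom.range_eq_top.mpr hf]

namespace ZMod

theorem orderOf_unitOfCoprime_of_dvd {q n d : ℕ} [NeZero n] (hd : d ∣ n)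
    (hq : q.Coprime n) (hgen : orderOf (unitOfCoprime q hq) = n.totient) :
    orderOf (unitOfCoprime q (hq.coprime_dvd_right hd)) = d.totient := by
  have : NeZero d := ⟨fun h => NeZero.ne n (Nat.eq_zero_of_zero_dvd (h ▸ hd))⟩
  have hmap : unitsMap hd (unitOfCoprime q hq) = unitOfCoprime q (hq.coprime_dvd_right hd) := by
    ext
    simp [unitsMap_def, coe_unitOfCoprime]
  rw [← hmap, orderOf_map_eq_card_of_surjective (unitsMap_surjective hd),
    Nat.card_eq_fintype_card, card_units_eq_totient]
  rw [hgen, Nat.card_eq_fintype_card, card_units_eq_totient]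

theorem orderOf_unitOfCoprime_dvd_of_pow_pow_eq_self {M : Type*} [CommMonoid M]
    {ζ : M} {q n k : ℕ} [NeZero n] (hζ : IsPrimitiveRoot ζ n) (hq : q.Coprime n)
    (h : ζ ^ q ^ k = ζ) : orderOf (unitOfCoprime q hq) ∣ k := by
  nth_rw 2 [← pow_one ζ] at h
  rw [(hζ.isOfFinOrder (NeZero.ne n)).pow_eq_pow_iff_modEq, ← hζ.eq_orderOf,
    ← natCast_eq_natCast_iff, Nat.cast_pow, Nat.cast_one] at h
  exact orderOf_dvd_of_pow_eq_one (Units.ext (by simpa [coe_unitOfCoprime] using h))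

end ZMod

theorem Nat.Prime.eq_three_of_totient_pow_dvd_two {p j : ℕ} (hp : p.Prime) (hodd : Odd p)
    (hj : 1 ≤ j) (h : (p ^ j).totient ∣ 2) : p = 3 ∧ j = 1 := by
  rw [Nat.totient_prime_pow hp hj] at h
  have hle := Nat.le_of_dvd two_pos h
  have hp3 : 3 ≤ p := by
    obtain ⟨k, rfl⟩ := hodd
    have := hp.two_le
    omega
  have hpow : p ^ (j - 1) = 1 := by
    have : p ^ (j - 1) * 2 ≤ 2 := le_trans (Nat.mul_le_mul_left _ (by omega)) hle
    have := Nat.one_le_pow (j - 1) p hp.pos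
    omega
  refine ⟨?_, ?_⟩
  · rw [hpow, one_mul] at hle
    omega
  · rw [Nat.pow_eq_one] at hpow
    have := hp.one_lt
    omega

namespace FiniteField

theorem natCast_ne_zero_of_coprime_card {F : Type*} [Field F] [Fintype F] {n : ℕ}
    (h : (Fintype.card F).Coprime n) : (n : F) ≠ 0 := by
  intro hn
  have := (Nat.isCoprime_iff_coprime.mpr h).map (Int.castRingHom F)
  simp [hn] at this

theorem pow_card_sq_eq_self_of_sq_eq {F K : Type*} [Field F] [Fintype F]
    [CommRing K] [IsDomain K] [Algebra F K] {x : K} {b c : F}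
    (hx : x ^ 2 = algebraMap F K b * x + algebraMap F K c) :
    x ^ Fintype.card F ^ 2 = x := by
  set σ := frobeniusAlgHom F K
  have hσ : ∀ y, σ y = y ^ Fintype.card F := fun _ => rfl
  have hσx : σ x ^ 2 = algebraMap F K b * σ x + algebraMap F K c := by
    simpa only [map_pow, map_add, map_mul, AlgHom.commutes] using congrArg σ hx
  have hroots : (σ x - x) * (σ x - (algebraMap F K b - x)) = 0 := by
    linear_combination hσx - hx
  rw [sq, pow_mul, ← hσ, ← hσ]
  rcases mul_eq_zero.mp hroots with h | h
  · rw [sub_eq_zero.mp h, sub_eq_zero.mp h]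
  · rw [sub_eq_zero.mp h, map_sub, AlgHom.commutes, sub_eq_zero.mp h, sub_sub_cancel]

end FiniteField

section Hat

variable {F K G : Type*} [Field F] [Field K] [Algebra F K] [Group G] [Fintype G]

theorem lift_hat (χ : G →* K) (S : Subgroup G) :
    lift F K G χ (hat F S) = (Nat.card S : F)⁻¹ • ∑ g : S, χ g := by
  simp only [hat, map_smul, map_sum, apply_ite (lift F K G χ), map_zero, lift_of]
  rw [← Finset.sum_filter]
  exact congrArg _ (Finset.sum_subtype _ (by simp) _)

theorem lift_hat_of_forall_eq_one {χ : G →* K} {S : Subgroup G} (hχ : ∀ g ∈ S, χ g = 1)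
    (hS : (Nat.card S : F) ≠ 0) : lift F K G χ (hat F S) = 1 := by
  rw [lift_hat, Finset.sum_congr rfl fun (g : S) _ => hχ g g.2, Finset.sum_const,
    Finset.card_univ, ← Nat.card_eq_fintype_card, nsmul_one, Algebra.smul_def,
    ← map_natCast (algebraMap F K), ← map_mul, inv_mul_cancel₀ hS, map_one]

theorem lift_hat_of_exists_ne_one {χ : G →* K} {S : Subgroup G} (hχ : ∃ g ∈ S, χ g ≠ 1) :
    lift F K G χ (hat F S) = 0 := by
  obtain ⟨g, hg, hχg⟩ := hχ
  have hne : χ.comp S.subtype ≠ 1 := fun h => hχg (by simpa using DFunLike.congr_fun h ⟨g, hg⟩)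
  rw [lift_hat, show ∑ g : S, χ g = 0 from sum_hom_units_eq_zero _ hne, smul_zero]

theorem lift_hat_zpowers_pow (hG : (Nat.card G : F) ≠ 0) {χ : G →* K} {a : G} {n : ℕ}
    (hχ : IsPrimitiveRoot (χ a) n) (d : ℕ) :
    lift F K G χ (hat F (zpowers (a ^ d))) = if n ∣ d then 1 else 0 := by
  split_ifs with hnd
  · refine lift_hat_of_forall_eq_one ?_ ?_
    · rintro _ ⟨t, rfl⟩
      simp [(hχ.pow_eq_one_iff_dvd d).mpr hnd]
    · obtain ⟨k, hk⟩ := card_subgroup_dvd_card (zpowers (a ^ d))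
      exact fun h => hG (by rw [hk, Nat.cast_mul, h, zero_mul])
  · refine lift_hat_of_exists_ne_one ⟨a ^ d, mem_zpowers _, ?_⟩
    rwa [map_pow, Ne, hχ.pow_eq_one_iff_dvd]

end Hat

theorem IsPrimitiveRoot.two_sub_add_inv_ne_zero {F K : Type*} [Field F] [Fintype F] [Field K]
    [Algebra F K] {p j : ℕ} (hp : p.Prime) (hodd : Odd p) (hj : 1 ≤ j)
    (hq : (Fintype.card F).Coprime (p ^ j))
    (hgen : orderOf (ZMod.unitOfCoprime (Fintype.card F) hq) = (p ^ j).totient)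
    {ζ : K} (hζ : IsPrimitiveRoot ζ (p ^ j)) : 2 - ζ + ζ⁻¹ ≠ 0 := by
  have : NeZero (p ^ j) := ⟨pow_ne_zero _ hp.ne_zero⟩
  intro h
  have hζ0 : ζ ≠ 0 := hζ.ne_zero (NeZero.ne _)
  have hquad : ζ ^ 2 = algebraMap F K 2 * ζ + algebraMap F K 1 := by
    rw [map_ofNat, map_one]
    field_simp at h
    linear_combination -h
  obtain ⟨rfl, rfl⟩ := hp.eq_three_of_totient_pow_dvd_two hodd hj
    (hgen ▸ ZMod.orderOf_unitOfCoprime_dvd_of_pow_pow_eq_self hζ hq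
      (FiniteField.pow_card_sq_eq_self_of_sq_eq hquad))
  have hcyc : 1 + ζ + ζ ^ 2 = 0 := by
    simpa [Finset.sum_range_succ] using hζ.geom_sum_eq_zero (by norm_num)
  rw [map_ofNat, map_one] at hquad
  have hlin : 3 * ζ + 2 = 0 := by linear_combination hcyc - hquad
  have h3 : (3 : K) ≠ 0 := fun h3 =>
    (one_ne_zero : (1 : K) ≠ 0) (by linear_combination (1 + ζ) * h3 - hlin)
  have hfix : ζ ^ Fintype.card F ^ 1 = ζ := by
    have := congrArg (FiniteField.frobeniusAlgHom F K) hlin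
    simp only [map_add, map_mul, map_ofNat, map_zero, FiniteField.frobeniusAlgHom_apply] at this
    exact mul_left_cancel₀ h3 (by linear_combination this - hlin)
  have := hgen ▸ ZMod.orderOf_unitOfCoprime_dvd_of_pow_pow_eq_self hζ hq hfix
  norm_num [Nat.totient_prime Nat.prime_three] at this

theorem stmt14 {F : Type*} [Field F] [Fintype F] (p m j : ℕ) (hp : p.Prime)
    (hodd : Odd p) (hj : 1 ≤ j) (hjm : j ≤ m)
    (hcop : Nat.Coprime (Fintype.card F) (p ^ m)) [NeZero (p ^ m)]
    -- `q` generates the unit group of `ℤ/pᵐ`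
    (hgen : orderOf (ZMod.unitOfCoprime (Fintype.card F) hcop) =
      (p ^ m).totient) :
    let A := Multiplicative (ZMod (p ^ m))
    let a : A := Multiplicative.ofAdd 1
    let e : MonoidAlgebra F A :=
      hat F (Subgroup.zpowers (a ^ p ^ j)) -
        hat F (Subgroup.zpowers (a ^ p ^ (j - 1)))
    (2 - MonoidAlgebra.of F A a + MonoidAlgebra.of F A a⁻¹) * e ≠ 0 := by
  intro A a e
  have hdvd : p ^ j ∣ p ^ m := pow_dvd_pow p hjm
  have hcopj := hcop.coprime_dvd_right hdvd
  have : NeZero ((p ^ j : ℕ) : F) := ⟨FiniteField.natCast_ne_zero_of_coprime_card hcopj⟩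
  obtain ⟨ζ, hζ⟩ := HasEnoughRootsOfUnity.exists_primitiveRoot (AlgebraicClosure F) (p ^ j)
  have hζm : ζ ^ p ^ m = 1 := (hζ.pow_eq_one_iff_dvd _).mpr hdvd
  let χ : A →* AlgebraicClosure F := (AddChar.zmodChar (p ^ m) hζm).toMonoidHom
  have hχa : χ a = ζ := by
    show AddChar.zmodChar _ hζm 1 = ζ
    simpa using AddChar.zmodChar_apply' hζm 1
  have hχ : IsPrimitiveRoot (χ a) (p ^ j) := hχa ▸ hζ
  have hA : (Nat.card A : F) ≠ 0 := by
    simpa [A] using FiniteField.natCast_ne_zero_of_coprime_card hcop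
  have he : lift F _ A χ e = 1 := by
    rw [map_sub, lift_hat_zpowers_pow hA hχ, lift_hat_zpowers_pow hA hχ, if_pos dvd_rfl,
      if_neg (by rw [Nat.pow_dvd_pow_iff_le_right hp.one_lt]; omega), sub_zero]
  intro h
  have := congrArg (lift F _ A χ) h
  rw [map_zero, map_mul, he, mul_one, map_add, map_sub, lift_of, lift_of, map_ofNat, map_inv,
    hχa] at this
  exact hζ.two_sub_add_inv_ne_zero hp hodd hj hcopj
    (ZMod.orderOf_unitOfCoprime_of_dvd hdvd hcop hgen) this
end

section
/- Let D₉ be the dihedral group of order 18 = ⟨a, b | a⁹ = b² = 1, bab = a^{-1}⟩, F_q a field with characteristic different from 2, 3, 5, 7 and with q of multiplicative order 6 modulo 9. Let e = Ĥ₁ − Ĥ₀ where H₁ = ⟨a³⟩ and H₀ = ⟨a⟩, and f = e₁₁ − e₁₂. Then the left ideal I = (F_q D₉)f has F_q-dimension 2 and minimum Hamming weight 15. -/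
/-! The idempotent `e = Ĥ₁ - Ĥ₀` is constant on the cosets of `H₁ = ⟨a³⟩`, the kernel of the
reduction `D₉ → D₃`, so `f` and its left translates are inflations of functions on `D₃`:
`36 f` inflates `φ` with `φ (r j) = φ (sr j) = (4, -5, 1)ⱼ`, and every left translate of `φ`
is an integer combination of `φ` and `φ (a⁻¹ ·)`, so the ideal is spanned by `f` and `a f`.
The weight of `x f + y a f` is `3` times the number of `q ∈ D₃` with `x φ q + y φ (a⁻¹ q) ≠ 0`.
Any two of the six vectors `(φ q, φ (a⁻¹ q))` have a determinant dividing `2520 = 2³ 3² 5 7`,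
hence nonzero in `F`, so at most one of the six values vanishes: the weight is at least `15`,
and `f - 4 a f` attains it. -/

open scoped Classical

open DihedralGroup MonoidAlgebra Finset

namespace DihedralGroup

def castHom {m n : ℕ} (h : m ∣ n) : DihedralGroup n →* DihedralGroup m where
  toFun
    | r i => r (ZMod.castHom h (ZMod m) i)
    | sr i => sr (ZMod.castHom h (ZMod m) i)
  map_one' := by simp only [one_def, map_zero]
  map_mul' := by
    rintro (i | i) (j | j) <;> simp only [r_mul_r, r_mul_sr, sr_mul_r, sr_mul_sr, map_add, map_sub]

end DihedralGroup

namespace MonoidAlgebra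

variable {F G Q : Type*} [CommSemiring F] [Group G] [Fintype G] [Group Q] (π : G →* Q)

noncomputable def inflate : (Q → F) →ₗ[F] MonoidAlgebra F G where
  toFun ψ := ofCoeff (Finsupp.equivFunOnFinite.symm (ψ ∘ π))
  map_add' _ _ := by ext; rfl
  map_smul' _ _ := by ext; rfl

@[simp]
theorem coeff_inflate (ψ : Q → F) (g : G) : (inflate π ψ).coeff g = ψ (π g) := rfl

theorem of_mul_inflate (h : G) (ψ : Q → F) :
    of F G h * inflate π ψ = inflate π (fun q => ψ ((π h)⁻¹ * q)) := by
  ext g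
  simp [of_apply, coeff_single_mul_apply]

theorem wt_inflate {K : Type*} [Field K] [Fintype Q] [DecidableEq Q] (ψ : Q → K) {m : ℕ}
    (hfiber : ∀ q, #{g | π g = q} = m) :
    wt (inflate π ψ) = m * #{q | ψ q ≠ 0} := by
  have hsupp : (inflate π ψ).coeff.support = ({g | ψ (π g) ≠ 0} : Finset G) := by
    ext g; simp
  rw [wt, hsupp, card_filter, ← sum_fiberwise univ π, card_filter, mul_sum]
  refine sum_congr rfl fun q _ => ?_
  rw [sum_congr rfl fun g hg => by rw [(mem_filter.1 hg).2], sum_const, hfiber, smul_eq_mul]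

theorem restrictScalars_span_singleton_le {M : Type*} [Monoid M] {x : MonoidAlgebra F M}
    {V : Submodule F (MonoidAlgebra F M)} (hV : ∀ g, of F M g * x ∈ V) :
    (Ideal.span {x}).restrictScalars F ≤ V := by
  rintro y hy
  obtain ⟨α, rfl⟩ := Ideal.mem_span_singleton'.1 hy
  clear hy
  induction α using MonoidAlgebra.induction_linear with
  | zero => simp
  | add α β hα hβ => rw [add_mul]; exact V.add_mem hα hβ
  | single g c =>
    rw [show single g c = c • of F M g by rw [of_apply, smul_single, smul_eq_mul, mul_one],
      smul_mul_assoc]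
    exact V.smul_mem c (hV g)

end MonoidAlgebra

theorem hat_eq_inflate {K G Q : Type*} [Field K] [Group G] [Fintype G] [Group Q] (π : G →* Q)
    (S : Subgroup G) (p : Q → Prop) [DecidablePred p] (hS : ∀ g, g ∈ S ↔ p (π g)) :
    hat K S = (Nat.card S : K)⁻¹ • inflate π (fun q => if p q then 1 else 0) := by
  unfold hat
  congr 1
  ext g
  simp only [coeff_sum, Finsupp.finsetSum_apply, of_apply, hS]
  simp [apply_ite (fun x : MonoidAlgebra K G => x.coeff g), coeff_single, Finsupp.single_apply]
  rw [sum_eq_single g (fun x _ hx => by simp [hx]) (by simp)]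
  simp

theorem intCast_ne_zero_of_dvd_2520 {F : Type*} [Field F]
    (hchar : ringChar F ∉ ({2, 3, 5, 7} : Set ℕ)) {z : ℤ} (hdvd : z ∣ 2520) :
    (z : F) ≠ 0 := by
  intro h
  have hp : ringChar F ∣ 2520 := by
    exact_mod_cast ((CharP.intCast_eq_zero_iff F (ringChar F) z).1 h).trans hdvd
  rcases CharP.char_is_prime_or_zero F (ringChar F) with hprime | hzero
  · have : ringChar F ∈ Nat.primeFactors 2520 :=
      Nat.mem_primeFactors.2 ⟨hprime, hp, by norm_num⟩
    simp only [← Nat.toFinset_factors, Nat.primeFactorsList_ofNat] at this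
    exact hchar (by simpa using this)
  · rw [hzero] at hp
    norm_num at hp

theorem two_ne_zero_and_three_ne_zero {F : Type*} [Field F]
    (hchar : ringChar F ∉ ({2, 3, 5, 7} : Set ℕ)) : (2 : F) ≠ 0 ∧ (3 : F) ≠ 0 :=
  ⟨by exact_mod_cast intCast_ne_zero_of_dvd_2520 (z := 2) hchar (by norm_num),
    by exact_mod_cast intCast_ne_zero_of_dvd_2520 (z := 3) hchar (by norm_num)⟩

theorem card_filter_mul_add_mul_eq_zero_le_one {ι K : Type*} [Fintype ι] [Field K]
    {A B : ι → K} (hAB : ∀ i j, i ≠ j → A i * B j ≠ A j * B i) {x y : K}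
    (hxy : x ≠ 0 ∨ y ≠ 0) :
    #{i | x * A i + y * B i = 0} ≤ 1 := by
  refine card_le_one.2 fun i hi j hj => by_contra fun hij => ?_
  simp only [mem_filter, mem_univ, true_and] at hi hj
  have hdet : A i * B j - A j * B i ≠ 0 := sub_ne_zero.2 (hAB i j hij)
  have hx : x * (A i * B j - A j * B i) = 0 := by linear_combination B j * hi - B i * hj
  have hy : y * (A i * B j - A j * B i) = 0 := by linear_combination A i * hj - A j * hi
  rcases hxy with hx0 | hy0
  · exact hx0 ((mul_eq_zero.1 hx).resolve_right hdet)
  · exact hy0 ((mul_eq_zero.1 hy).resolve_right hdet)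

namespace Dihedral9

abbrev mod3 : DihedralGroup 9 →* DihedralGroup 3 := castHom (by norm_num)

theorem mem_zpowers_r_one_pow_three_iff (g : DihedralGroup 9) :
    g ∈ Subgroup.zpowers (r 1 ^ 3) ↔ mod3 g = 1 := by
  rw [r_one_pow, mem_zpowers_iff_mem_range_orderOf, orderOf_r]
  revert g
  decide

theorem mem_zpowers_r_one_iff (g : DihedralGroup 9) :
    g ∈ Subgroup.zpowers (r 1) ↔ mod3 g ∈ Set.range r := by
  rw [mem_zpowers_iff_mem_range_orderOf, orderOf_r_one]
  revert g
  decide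

theorem card_zpowers_r_one_pow_three :
    Nat.card (Subgroup.zpowers (r 1 ^ 3 : DihedralGroup 9)) = 3 := by
  rw [Nat.card_zpowers, r_one_pow, orderOf_r]
  rfl

theorem card_fiber_mod3 (q : DihedralGroup 3) : #{g | mod3 g = q} = 3 := by
  revert q
  decide

variable (F : Type*) [Field F]

noncomputable def a : MonoidAlgebra F (DihedralGroup 9) := of F _ (r 1)

noncomputable def b : MonoidAlgebra F (DihedralGroup 9) := of F _ (sr 0)

noncomputable def e : MonoidAlgebra F (DihedralGroup 9) :=
  hat F (Subgroup.zpowers (r 1 ^ 3)) - hat F (Subgroup.zpowers (r (1 : ZMod 9)))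

noncomputable def f : MonoidAlgebra F (DihedralGroup 9) :=
  ((2 : F)⁻¹ • (1 + b F)) * e F -
    ((2 : F)⁻¹ • (1 + b F)) * a F * ((2 : F)⁻¹ • (1 - b F)) * e F

def ePattern (q : DihedralGroup 3) : ℤ :=
  (if q = 1 then 3 else 0) - (if q ∈ Set.range r then 1 else 0)

def fPattern : DihedralGroup 3 → ℤ
  | r i => ![4, -5, 1] i
  | sr i => ![4, -5, 1] i

def afPattern (q : DihedralGroup 3) : ℤ := fPattern ((mod3 (r 1))⁻¹ * q)

variable {F}

theorem e_eq_inflate (h3 : (3 : F) ≠ 0) :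
    e F = inflate mod3 (fun q => (9 : F)⁻¹ * ePattern q) := by
  rw [e, hat_eq_inflate mod3 _ (· = 1) mem_zpowers_r_one_pow_three_iff,
    hat_eq_inflate mod3 _ (· ∈ Set.range r) mem_zpowers_r_one_iff, card_zpowers_r_one_pow_three,
    Nat.card_zpowers, orderOf_r_one, ← map_smul, ← map_smul, ← map_sub]
  congr 1
  funext q
  simp only [ePattern, Pi.sub_apply, Pi.smul_apply, smul_eq_mul]
  push_cast
  rw [show (9 : F) = 3 * 3 by norm_num]
  split_ifs <;> field_simp <;> ring

theorem f_eq_inflate (h2 : (2 : F) ≠ 0) (h3 : (3 : F) ≠ 0) :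
    f F = inflate mod3 (fun q => (36 : F)⁻¹ * fPattern q) := by
  have hf : f F =
      (2 : F)⁻¹ • (1 + b F) * (e F - a F * ((2 : F)⁻¹ • (1 - b F) * e F)) := by
    simp only [f, mul_sub, mul_assoc]
  rw [hf, e_eq_inflate h3]
  simp only [a, b, smul_mul_assoc, add_mul, sub_mul, one_mul, of_mul_inflate, ← map_add,
    ← map_sub, ← map_smul]
  congr 1
  funext q
  simp only [Pi.add_apply, Pi.sub_apply, Pi.smul_apply, smul_eq_mul]
  set s := (mod3 (sr 0))⁻¹
  set ρ := (mod3 (r 1))⁻¹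
  have hpattern : ∀ q, 2 * (ePattern q + ePattern (s * q)) - (ePattern (ρ * q) -
      ePattern (s * (ρ * q)) + ePattern (ρ * (s * q)) - ePattern (s * (ρ * (s * q)))) =
      fPattern q := by
    decide
  rw [← hpattern q]
  push_cast
  rw [show (36 : F) = 2 * 2 * 9 by norm_num, show (9 : F) = 3 * 3 by norm_num]
  field_simp
  ring

theorem a_mul_f_eq_inflate (h2 : (2 : F) ≠ 0) (h3 : (3 : F) ≠ 0) :
    a F * f F = inflate mod3 (fun q => (36 : F)⁻¹ * afPattern q) := by
  rw [a, f_eq_inflate h2 h3, of_mul_inflate]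
  rfl

theorem of_mul_f_mem_span (h2 : (2 : F) ≠ 0) (h3 : (3 : F) ≠ 0) (g : DihedralGroup 9) :
    of F _ g * f F ∈ Submodule.span F {f F, a F * f F} := by
  have htranslate : ∀ h : DihedralGroup 3,
      ∃ m ∈ ({-1, 0, 1} : Finset ℤ), ∃ n ∈ ({-1, 0, 1} : Finset ℤ),
        ∀ q, fPattern (h * q) = m * fPattern q + n * afPattern q := by
    decide
  obtain ⟨m, -, n, -, hmn⟩ := htranslate (mod3 g)⁻¹
  refine Submodule.mem_span_pair.2 ⟨m, n, ?_⟩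
  rw [a_mul_f_eq_inflate h2 h3, f_eq_inflate h2 h3, of_mul_inflate, ← map_smul, ← map_smul,
    ← map_add]
  congr 1
  funext q
  simp only [Pi.add_apply, Pi.smul_apply, smul_eq_mul, hmn]
  push_cast
  ring

theorem restrictScalars_span_f (h2 : (2 : F) ≠ 0) (h3 : (3 : F) ≠ 0) :
    (Ideal.span {f F}).restrictScalars F = Submodule.span F {f F, a F * f F} := by
  refine le_antisymm (restrictScalars_span_singleton_le (of_mul_f_mem_span h2 h3)) ?_
  rw [Submodule.span_le, Set.insert_subset_iff, Set.singleton_subset_iff]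
  exact ⟨Ideal.subset_span rfl, Ideal.mul_mem_left _ _ (Ideal.subset_span rfl)⟩

theorem wt_smul_f_add_smul_a_mul_f (h2 : (2 : F) ≠ 0) (h3 : (3 : F) ≠ 0) (x y : F) :
    wt (x • f F + y • (a F * f F)) = 3 * #{q | x * fPattern q + y * afPattern q ≠ 0} := by
  have h36 : (36 : F)⁻¹ ≠ 0 := inv_ne_zero <| by
    rw [show (36 : F) = 2 * 2 * (3 * 3) by norm_num]
    exact mul_ne_zero (mul_ne_zero h2 h2) (mul_ne_zero h3 h3)
  rw [a_mul_f_eq_inflate h2 h3, f_eq_inflate h2 h3, ← map_smul, ← map_smul, ← map_add,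
    wt_inflate _ _ card_fiber_mod3]
  congr 2
  ext q
  simp only [mem_filter, mem_univ, true_and, Pi.add_apply, Pi.smul_apply, smul_eq_mul]
  rw [show ∀ u v : F, x * (36⁻¹ * u) + y * (36⁻¹ * v) = 36⁻¹ * (x * u + y * v) from
    fun u v => by ring, mul_ne_zero_iff, and_iff_right h36]

theorem fifteen_le_wt (hchar : ringChar F ∉ ({2, 3, 5, 7} : Set ℕ)) {x y : F}
    (hxy : x ≠ 0 ∨ y ≠ 0) : 15 ≤ wt (x • f F + y • (a F * f F)) := by
  obtain ⟨h2, h3⟩ := two_ne_zero_and_three_ne_zero hchar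
  have hdet : ∀ i j : DihedralGroup 3, i ≠ j →
      fPattern i * afPattern j - fPattern j * afPattern i ∣ 2520 := by
    decide
  have hzero : #{q | x * fPattern q + y * afPattern q = 0} ≤ 1 :=
    card_filter_mul_add_mul_eq_zero_le_one (fun i j hij => sub_ne_zero.1 <| by
      exact_mod_cast intCast_ne_zero_of_dvd_2520 hchar (hdet i j hij)) hxy
  have hsplit := card_filter_add_card_filter_not (s := univ)
    (p := fun q : DihedralGroup 3 => x * fPattern q + y * afPattern q ≠ 0)
  simp only [card_univ, DihedralGroup.card, not_not] at hsplit
  rw [wt_smul_f_add_smul_a_mul_f h2 h3]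
  omega

theorem wt_f_sub_four_smul_a_mul_f (hchar : ringChar F ∉ ({2, 3, 5, 7} : Set ℕ)) :
    wt ((1 : F) • f F + (-4 : F) • (a F * f F)) = 15 := by
  obtain ⟨h2, h3⟩ := two_ne_zero_and_three_ne_zero hchar
  have hval : ∀ q,
      fPattern q - 4 * afPattern q = 0 ∨ fPattern q - 4 * afPattern q ∣ 2520 := by
    decide
  have hcount : #{q | fPattern q - 4 * afPattern q ≠ 0} = 5 := by decide
  rw [wt_smul_f_add_smul_a_mul_f h2 h3, show 15 = 3 * 5 from rfl, ← hcount]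
  congr 2
  ext q
  simp only [mem_filter, mem_univ, true_and]
  rw [show (1 : F) * fPattern q + -4 * afPattern q = ((fPattern q - 4 * afPattern q : ℤ) : F) by
    push_cast; ring]
  rcases hval q with h0 | hdvd
  · simp [h0]
  · exact iff_of_true (intCast_ne_zero_of_dvd_2520 hchar hdvd)
      (by rintro h0; rw [h0] at hdvd; norm_num at hdvd)

theorem finrank_span_f (hchar : ringChar F ∉ ({2, 3, 5, 7} : Set ℕ)) :
    Module.finrank F ((Ideal.span {f F}).restrictScalars F) = 2 := by
  obtain ⟨h2, h3⟩ := two_ne_zero_and_three_ne_zero hchar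
  have hli : LinearIndependent F ![f F, a F * f F] := by
    refine LinearIndependent.pair_iff.2 fun x y hxy => ?_
    by_contra! hne
    have := fifteen_le_wt hchar (not_and_or.1 fun h => hne h.1 h.2)
    rw [hxy] at this
    simp [wt] at this
  rw [restrictScalars_span_f h2 h3, ← Matrix.range_cons_cons_empty, finrank_span_eq_card hli,
    Fintype.card_fin]

theorem isLeast_wt (hchar : ringChar F ∉ ({2, 3, 5, 7} : Set ℕ)) :
    IsLeast {n : ℕ | ∃ α ∈ Ideal.span {f F}, α ≠ 0 ∧ wt α = n} 15 := by
  obtain ⟨h2, h3⟩ := two_ne_zero_and_three_ne_zero hchar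
  have hspan (α) : α ∈ Ideal.span {f F} ↔ α ∈ Submodule.span F {f F, a F * f F} := by
    rw [← restrictScalars_span_f h2 h3, Submodule.restrictScalars_mem]
  have hwt := wt_f_sub_four_smul_a_mul_f hchar
  refine ⟨⟨_, (hspan _).2 (Submodule.mem_span_pair.2 ⟨1, -4, rfl⟩), fun h => ?_, hwt⟩,
    ?_⟩
  · rw [h] at hwt
    simp [wt] at hwt
  · rintro n ⟨α, hα, hα0, rfl⟩
    obtain ⟨x, y, rfl⟩ := Submodule.mem_span_pair.1 ((hspan α).1 hα)
    refine fifteen_le_wt hchar (not_and_or.1 fun h => hα0 ?_)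
    simp [h.1, h.2]

end Dihedral9

theorem stmt15_general {F : Type*} [Field F]
    (hchar : ringChar F ∉ ({2, 3, 5, 7} : Set ℕ)) :
    let D := DihedralGroup 9
    let a : MonoidAlgebra F D := MonoidAlgebra.of F D (DihedralGroup.r 1)
    let b : MonoidAlgebra F D := MonoidAlgebra.of F D (DihedralGroup.sr 0)
    let e : MonoidAlgebra F D :=
      hat F (Subgroup.zpowers (DihedralGroup.r 1 ^ 3)) -
        hat F (Subgroup.zpowers (DihedralGroup.r (1 : ZMod 9)))
    let f : MonoidAlgebra F D := ((2 : F)⁻¹ • (1 + b)) * e -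
      ((2 : F)⁻¹ • (1 + b)) * a * ((2 : F)⁻¹ • (1 - b)) * e
    Module.finrank F (Submodule.restrictScalars F (Ideal.span {f})) = 2 ∧
      IsLeast {n : ℕ | ∃ α ∈ Ideal.span {f}, α ≠ 0 ∧ wt α = n} 15 :=
  ⟨Dihedral9.finrank_span_f hchar, Dihedral9.isLeast_wt hchar⟩

theorem stmt15 {F : Type*} [Field F] [Fintype F]
    (hchar : ringChar F ∉ ({2, 3, 5, 7} : Set ℕ))
    (hcop : Nat.Coprime (Fintype.card F) 9)
    -- `q` has multiplicative order `6` modulo `9`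
    (hord : orderOf (ZMod.unitOfCoprime (Fintype.card F) hcop : (ZMod 9)ˣ) = 6) :
    let D := DihedralGroup 9
    let a : MonoidAlgebra F D := MonoidAlgebra.of F D (DihedralGroup.r 1)
    let b : MonoidAlgebra F D := MonoidAlgebra.of F D (DihedralGroup.sr 0)
    let e : MonoidAlgebra F D :=
      hat F (Subgroup.zpowers (DihedralGroup.r 1 ^ 3)) -
        hat F (Subgroup.zpowers (DihedralGroup.r (1 : ZMod 9)))
    let f : MonoidAlgebra F D := ((2 : F)⁻¹ • (1 + b)) * e -
      ((2 : F)⁻¹ • (1 + b)) * a * ((2 : F)⁻¹ • (1 - b)) * e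
    Module.finrank F (Submodule.restrictScalars F (Ideal.span {f})) = 2 ∧
      IsLeast {n : ℕ | ∃ α ∈ Ideal.span {f}, α ≠ 0 ∧ wt α = n} 15 :=
  stmt15_general hchar
end
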